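/- arXiv:2504.04852 — 3 statements merged into one kernel-verified Lean document; each statement's English description precedes it below -/
import Mathlib

section
/- Let û ∈ [0, ρ_b], R̃ ∈ ℝ with |R̃| ≤ k_b·R_max, ε > 0, and assume R̃ = 0 whenever û ≥ ρ_b - ε. If Δt ≤ ε/(k_b·R_max), then u := û + Δt·R̃ satisfies u ≤ ρ_b. -/
theorem stmt12 (ρb ε Δt Rmax uhat Rtil : ℝ) (kb : ℕ) (hkb : 0 < kb)
    (hRmax : 0 < Rmax) (hε : 0 < ε)
    (hu : uhat ∈ Set.Icc 0 ρb)
    (hR : |Rtil| ≤ (kb : ℝ) * Rmax)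
    (hvanish : ρb - ε ≤ uhat → Rtil = 0)
    (hΔt : 0 ≤ Δt) (hCFL : Δt ≤ ε / ((kb : ℝ) * Rmax)) :
    uhat + Δt * Rtil ≤ ρb := by
  have hk : (0:ℝ) < (kb : ℝ) * Rmax := by positivity
  by_cases h : ρb - ε ≤ uhat
  · simp [hvanish h]; linarith [hu.2]
  · push_neg at h
    have h1 : Δt * Rtil ≤ Δt * ((kb:ℝ) * Rmax) :=
      mul_le_mul_of_nonneg_left (le_trans (le_abs_self _) hR) hΔt
    have h2 : Δt * ((kb:ℝ) * Rmax) ≤ ε := by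
      calc Δt * ((kb:ℝ)*Rmax) ≤ (ε / ((kb:ℝ)*Rmax)) * ((kb:ℝ)*Rmax) :=
        mul_le_mul_of_nonneg_right hCFL hk.le
      _ = ε := by field_simp
    linarith
end

section
/- Let a_h(φ, w; β) := -∫_Ω φ β·∇w + Σ_{e∈E_int} ∫_e ((β·n_e)_⊕ φ_K - (β·n_e)_⊖ φ_L)·[w] be the upwind convection form on piecewise constant functions. If β ∈ H(div; Ω) with div β = 0, φ_h is piecewise constant, K∘ is a cell attaining the minimum of φ_h, and α ∈ ℝ, then a_h(φ_h, Π_⊖^α(φ_h); β) ≤ 0, where Π_⊖^α(φ_h) equals (φ_{K∘} - α)_⊖ on K∘ and 0 elsewhere. Analogously, with K^◇ attaining the maximum, a_h(φ_h, Π_⊕^α(φ_h); β) ≥ 0, where Π_⊕^α(φ_h) equals (φ_{K^◇} - α)_⊕ on K^◇ and 0 elsewhere. -/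
lemma aux14 {C E : Type*} [Fintype C] [Fintype E] [DecidableEq C]
    (Kc Lc : E → C) (bp bm : E → ℝ)
    (hbp : ∀ e, 0 ≤ bp e) (hbm : ∀ e, 0 ≤ bm e)
    (hdiv : ∀ K : C,
      (∑ e ∈ Finset.univ.filter fun e => Kc e = K, (bp e - bm e))
        - (∑ e ∈ Finset.univ.filter fun e => Lc e = K, (bp e - bm e)) = 0)
    (φ : C → ℝ) (K₀ : C) (hmin : ∀ K, φ K₀ ≤ φ K) :
    ∑ e, (bp e * φ (Kc e) - bm e * φ (Lc e)) *
      ((if Kc e = K₀ then (1:ℝ) else 0) - (if Lc e = K₀ then (1:ℝ) else 0)) ≤ 0 := by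
  have hsplit : ∀ e, (bp e * φ (Kc e) - bm e * φ (Lc e)) *
      ((if Kc e = K₀ then (1:ℝ) else 0) - (if Lc e = K₀ then (1:ℝ) else 0))
      = (bp e - bm e) * ((if Kc e = K₀ then (1:ℝ) else 0)
          - (if Lc e = K₀ then (1:ℝ) else 0)) * φ K₀
        + ((if Kc e = K₀ then bm e * (φ K₀ - φ (Lc e)) else 0)
          + (if Lc e = K₀ then bp e * (φ K₀ - φ (Kc e)) else 0)) := by
    intro e
    split_ifs with h1 h2 h2 <;> (try rw [h1]) <;> (try rw [h2]) <;> ring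
  rw [Finset.sum_congr rfl (fun e _ => hsplit e), Finset.sum_add_distrib]
  have h0 : ∑ e, (bp e - bm e) * ((if Kc e = K₀ then (1:ℝ) else 0)
      - (if Lc e = K₀ then (1:ℝ) else 0)) * φ K₀ = 0 := by
    have := hdiv K₀
    rw [Finset.sum_filter, Finset.sum_filter] at this
    rw [← Finset.sum_mul]
    have : ∑ e, (bp e - bm e) * ((if Kc e = K₀ then (1:ℝ) else 0)
        - (if Lc e = K₀ then (1:ℝ) else 0)) = 0 := by
      calc ∑ e, (bp e - bm e) * ((if Kc e = K₀ then (1:ℝ) else 0)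
            - (if Lc e = K₀ then (1:ℝ) else 0))
          = (∑ e, if Kc e = K₀ then bp e - bm e else 0)
            - (∑ e, if Lc e = K₀ then bp e - bm e else 0) := by
            rw [← Finset.sum_sub_distrib]
            refine Finset.sum_congr rfl fun e _ => ?_
            split_ifs <;> ring
        _ = 0 := this
    rw [this, zero_mul]
  rw [h0, zero_add]
  apply Finset.sum_nonpos
  intro e _
  have h1 : (if Kc e = K₀ then bm e * (φ K₀ - φ (Lc e)) else 0) ≤ 0 := by
    split_ifs
    · exact mul_nonpos_of_nonneg_of_nonpos (hbm e) (by linarith [hmin (Lc e)])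
    · exact le_refl 0
  have h2 : (if Lc e = K₀ then bp e * (φ K₀ - φ (Kc e)) else 0) ≤ 0 := by
    split_ifs
    · exact mul_nonpos_of_nonneg_of_nonpos (hbp e) (by linarith [hmin (Kc e)])
    · exact le_refl 0
  linarith

theorem stmt14 {C E : Type*} [Fintype C] [Fintype E] [DecidableEq C]
    (Kc Lc : E → C) (bp bm : E → ℝ)
    (hbp : ∀ e, 0 ≤ bp e) (hbm : ∀ e, 0 ≤ bm e)
    (hdiv : ∀ K : C,
      (∑ e ∈ Finset.univ.filter fun e => Kc e = K, (bp e - bm e))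
        - (∑ e ∈ Finset.univ.filter fun e => Lc e = K, (bp e - bm e)) = 0)
    (φ : C → ℝ) (K₀ Kd : C)
    (hmin : ∀ K, φ K₀ ≤ φ K) (hmax : ∀ K, φ K ≤ φ Kd) (α : ℝ) :
    (∑ e, (bp e * φ (Kc e) - bm e * φ (Lc e)) *
        ((if Kc e = K₀ then -(min (φ K₀ - α) 0) else 0)
          - (if Lc e = K₀ then -(min (φ K₀ - α) 0) else 0)) ≤ 0) ∧
    (0 ≤ ∑ e, (bp e * φ (Kc e) - bm e * φ (Lc e)) *
        ((if Kc e = Kd then max (φ Kd - α) 0 else 0)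
          - (if Lc e = Kd then max (φ Kd - α) 0 else 0))) := by
  constructor
  · have hS := aux14 Kc Lc bp bm hbp hbm hdiv φ K₀ hmin
    have hm : 0 ≤ -(min (φ K₀ - α) 0) := neg_nonneg.mpr (min_le_right _ _)
    have key : (∑ e, (bp e * φ (Kc e) - bm e * φ (Lc e)) *
        ((if Kc e = K₀ then -(min (φ K₀ - α) 0) else 0)
          - (if Lc e = K₀ then -(min (φ K₀ - α) 0) else 0)))
        = (∑ e, (bp e * φ (Kc e) - bm e * φ (Lc e)) *
            ((if Kc e = K₀ then (1:ℝ) else 0) - (if Lc e = K₀ then (1:ℝ) else 0)))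
          * (-(min (φ K₀ - α) 0)) := by
      rw [Finset.sum_mul]
      exact Finset.sum_congr rfl fun e _ => by split_ifs <;> ring
    rw [key]
    exact mul_nonpos_of_nonpos_of_nonneg hS hm
  · have hS := aux14 Kc Lc bp bm hbp hbm hdiv (fun K => -φ K) Kd
      (fun K => neg_le_neg (hmax K))
    have hM : 0 ≤ max (φ Kd - α) 0 := le_max_right _ _
    have key : (∑ e, (bp e * φ (Kc e) - bm e * φ (Lc e)) *
        ((if Kc e = Kd then max (φ Kd - α) 0 else 0)
          - (if Lc e = Kd then max (φ Kd - α) 0 else 0)))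
        = -((∑ e, (bp e * (fun K => -φ K) (Kc e) - bm e * (fun K => -φ K) (Lc e)) *
            ((if Kc e = Kd then (1:ℝ) else 0) - (if Lc e = Kd then (1:ℝ) else 0)))
          * (max (φ Kd - α) 0)) := by
      rw [← neg_mul, ← Finset.sum_neg_distrib, Finset.sum_mul]
      exact Finset.sum_congr rfl fun e _ => by simp only; split_ifs <;> ring
    rw [key]
    have := mul_nonpos_of_nonpos_of_nonneg hS hM
    linarith
end

section
/- Let K∘ minimize a piecewise constant function ĉ_h over the cells of a triangulation, and suppose for each interior edge e = K∘ ∩ L we have flux contributions F_e = (β_⊕^e((ĉ_{K∘})_⊕ ψ↑_{K∘} + (ĉ_L)_⊕ ψ↓_L) - β_⊖^e((ĉ_L)_⊕ ψ↑_L + (ĉ_{K∘})_⊕ ψ↓_{K∘}))·(ĉ_{K∘})_⊖ where β_⊕^e, β_⊖^e ≥ 0, ψ↑ ≥ 0 pointwise, ψ↓ ≤ 0 pointwise, and ĉ_L ≥ ĉ_{K∘} for all L. Then Σ_e F_e ≤ 0. -/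
theorem stmt16 {E : Type*} [Fintype E]
    (βp βm : E → ℝ) (hβp : ∀ e, 0 ≤ βp e) (hβm : ∀ e, 0 ≤ βm e)
    (c0 : ℝ) (cL : E → ℝ) (hmin : ∀ e, c0 ≤ cL e)
    (ψup0 : ℝ) (ψupL : E → ℝ) (ψdn0 : ℝ) (ψdnL : E → ℝ)
    (hψup0 : 0 ≤ ψup0) (hψupL : ∀ e, 0 ≤ ψupL e)
    (hψdn0 : ψdn0 ≤ 0) (hψdnL : ∀ e, ψdnL e ≤ 0) :
    ∑ e, (βp e * (max c0 0 * ψup0 + max (cL e) 0 * ψdnL e)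
        - βm e * (max (cL e) 0 * ψupL e + max c0 0 * ψdn0)) * (-(min c0 0)) ≤ 0 := by
  apply Finset.sum_nonpos
  intro e _
  rcases le_or_gt c0 0 with h | h
  · rw [max_eq_right h]
    have hm : 0 ≤ -(min c0 0) := by simp [min_eq_left h]; linarith
    have hPL : (0:ℝ) ≤ max (cL e) 0 := le_max_right _ _
    nlinarith [mul_nonneg (mul_nonneg (hβp e) hPL) (neg_nonneg.mpr (hψdnL e)),
      mul_nonneg (mul_nonneg (hβm e) hPL) (hψupL e)]
  · rw [min_eq_right h.le]
    simp
end
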